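/- The uniform Bernoulli metric space of cellular automata is not complete: there exists a Cauchy sequence (cᵢ) of cellular automata with no limit in CA. -/

import Mathlib

open MeasureTheory Filter Function

section BasicDefs

variable {A : Type}

/-- `f` admits a local rule of radius `r`: there is `F` depending only on
coordinates in `[-r, r]` such that `f x i = F (σ^i x)`. -/
def HasRadius (r : ℕ) (f : (ℤ → A) → (ℤ → A)) : Prop :=
  ∃ F : (ℤ → A) → A,
    (∀ x y : ℤ → A, (∀ j : ℤ, |j| ≤ (r : ℤ) → x j = y j) → F x = F y) ∧
    ∀ (x : ℤ → A) (i : ℤ), f x i = F fun j => x (i + j)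

/-- A cellular automaton is a map admitting a local rule of some radius. -/
def IsCA (f : (ℤ → A) → (ℤ → A)) : Prop := ∃ r, HasRadius r f

/-- The minimal radius of a cellular automaton. -/
noncomputable def rad (f : (ℤ → A) → (ℤ → A)) : ℕ := sInf {r : ℕ | HasRadius r f}

/-- Centered words of radius `r`. -/
def Word (A : Type) (r : ℕ) := (Finset.Icc (-(r : ℤ)) (r : ℤ) : Finset ℤ) → A

/-- The difference set of `c` and `d` for radius `r`: centered words of radius `r`
on which the images of `c` and `d` differ at the central cell. -/
def diffSet (r : ℕ) (c d : (ℤ → A) → (ℤ → A)) : Set (Word A r) :=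
  {w | ∃ x : ℤ → A, (∀ j : (Finset.Icc (-(r : ℤ)) (r : ℤ) : Finset ℤ), x j.1 = w j) ∧
        c x 0 ≠ d x 0}

/-- The shift map. -/
def shift (x : ℤ → A) : ℤ → A := fun i => x (i + 1)

/-- Preimages of the centered word `v` of radius `n` under the word function of `c`
used with radius `r`: centered words `u` of radius `n + r` such that some (equivalently,
by the radius assumption, every) configuration extending `u` maps under `c` to a
configuration extending `v` in its central part. -/
def wordPreimages (c : (ℤ → A) → (ℤ → A)) (n r : ℕ) (v : Word A n) :
    Set (Word A (n + r)) :=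
  {u | ∃ x : ℤ → A,
        (∀ j : (Finset.Icc (-((n + r : ℕ) : ℤ)) ((n + r : ℕ) : ℤ) : Finset ℤ), x j.1 = u j) ∧
        ∀ j : (Finset.Icc (-(n : ℤ)) (n : ℤ) : Finset ℤ), c x j.1 = v j}

-- The Cantor metric on configurations.
open Classical in
noncomputable def dC (x y : ℤ → A) : ℝ :=
  ∑' i : ℤ, if x i ≠ y i then (2 : ℝ) ^ (-|i|) else 0

/-- The Besicovitch pseudodistance on configurations. -/
noncomputable def dB (x y : ℤ → A) : ℝ :=
  limsup (fun n : ℕ =>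
    (({i : ℤ | |i| ≤ (n : ℤ) ∧ x i ≠ y i}.ncard : ℝ)) / (2 * (n : ℝ) + 1)) atTop

end BasicDefs

section FintypeDefs

variable {A : Type} [Fintype A]

/-- The normalized size of the difference set for radius `r`. -/
noncomputable def deltaR (r : ℕ) (c d : (ℤ → A) → (ℤ → A)) : ℝ :=
  (diffSet r c d).ncard / (Fintype.card A : ℝ) ^ (2 * r + 1)

/-- The uniform Bernoulli distance between two cellular automata (computed with the
common radius `max (rad c) (rad d)`; by radius-independence this is the canonical value). -/
noncomputable def delta (c d : (ℤ → A) → (ℤ → A)) : ℝ :=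
  deltaR (max (rad c) (rad d)) c d

end FintypeDefs

section MeasureDefs

variable {A : Type} [MeasurableSpace A]

/-- The pseudometric on cellular automata induced by the measure `μ`:
the measure of the cylinder of the difference set, i.e. of the set of
configurations on which `c` and `d` differ at coordinate `0`. -/
noncomputable def deltaMu (μ : Measure (ℤ → A)) (c d : (ℤ → A) → (ℤ → A)) : ℝ :=
  (μ {x | c x 0 ≠ d x 0}).toReal

/-- `c` preserves the measure `μ`. -/
def Preserves (μ : Measure (ℤ → A)) (c : (ℤ → A) → (ℤ → A)) : Prop :=
  ∀ B : Set (ℤ → A), MeasurableSet B → μ (c ⁻¹' B) = μ B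

/-- `μ` is shift-invariant. -/
def ShiftInvariant (μ : Measure (ℤ → A)) : Prop :=
  ∀ B : Set (ℤ → A), MeasurableSet B → μ (shift ⁻¹' B) = μ B

end MeasureDefs

/-!
The automaton `blockCA z τ i` looks at the disjoint blocks `(l², (l+1)²]`, `l < i`, to the right of
the origin and applies a fixed-point-free map `τ` to the central cell once for every block that is
constantly `z`. For `m ≤ n`, `blockCA m` and `blockCA n` can only differ at the origin if some block
`m ≤ l < n` is constantly `z`, an event of probability at most `|A|^-(2l+1)`; hence their distance
is at most `2^-m` and the sequence is Cauchy.

If `c` is a cellular automaton of radius `r < i`, block `r` lies outside the neighbourhood of `c`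
but inside that of `blockCA i`. On configurations where block `r` is constantly `z`, changing one of
its cells changes the output of `blockCA i` at the origin but not that of `c`, so the two differ on
a set of probability at least `|A|^-(2r+1)`: no cellular automaton is a limit of the sequence.
-/

section Radius

variable {A : Type} {c d : (ℤ → A) → (ℤ → A)} {r R : ℕ}

theorem HasRadius.mono (h : HasRadius r c) (hrR : r ≤ R) : HasRadius R c := by
  obtain ⟨F, hF, hc⟩ := h
  exact ⟨F, fun x y hxy => hF x y fun j hj => hxy j (hj.trans (by exact_mod_cast hrR)), hc⟩

theorem IsCA.hasRadius_rad (h : IsCA c) : HasRadius (rad c) c := Nat.sInf_mem h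

theorem HasRadius.apply_zero_congr (h : HasRadius r c) {x y : ℤ → A}
    (hxy : ∀ j : ℤ, |j| ≤ r → x j = y j) : c x 0 = c y 0 := by
  obtain ⟨F, hF, hc⟩ := h
  rw [hc x 0, hc y 0]
  exact hF _ _ fun j hj => by simpa using hxy j hj

theorem HasRadius.apply_update_zero [DecidableEq A] (h : HasRadius r c) (x : ℤ → A) {p : ℤ}
    (hp : r < |p|) (a : A) : c (update x p a) 0 = c x 0 :=
  h.apply_zero_congr fun j hj => update_of_ne (by rintro rfl; omega) _ _

theorem diffSet_comm (c d : (ℤ → A) → (ℤ → A)) : diffSet R c d = diffSet R d c := by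
  ext w
  exact ⟨fun ⟨x, hx, hne⟩ => ⟨x, hx, hne.symm⟩,
    fun ⟨x, hx, hne⟩ => ⟨x, hx, hne.symm⟩⟩

theorem delta_comm [Fintype A] (c d : (ℤ → A) → (ℤ → A)) : delta c d = delta d c := by
  rw [delta, delta, deltaR, deltaR, max_comm, diffSet_comm]

end Radius

section Words

variable {A : Type}

noncomputable instance (R : ℕ) [Fintype A] : Fintype (Word A R) :=
  inferInstanceAs (Fintype (_ → A))

noncomputable instance (R : ℕ) [DecidableEq A] : DecidableEq (Word A R) :=
  inferInstanceAs (DecidableEq (_ → A))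

noncomputable def pad (a : A) (R : ℕ) (w : Word A R) : ℤ → A :=
  fun j => if h : j ∈ Finset.Icc (-(R : ℤ)) R then w ⟨j, h⟩ else a

variable {a : A} {R : ℕ}

theorem pad_apply_coe (w : Word A R) (j : Finset.Icc (-(R : ℤ)) R) : pad a R w j = w j :=
  dif_pos j.2

theorem pad_apply_of_notMem (w : Word A R) {j : ℤ} (hj : j ∉ Finset.Icc (-(R : ℤ)) R) :
    pad a R w j = a :=
  dif_neg hj

def Word.update (w : Word A R) (p : ℤ) (b : A) : Word A R := fun j => if j.1 = p then b else w j

theorem pad_wordUpdate [DecidableEq A] (w : Word A R) {p : ℤ}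
    (hp : p ∈ Finset.Icc (-(R : ℤ)) R) (b : A) :
    pad a R (w.update p b) = update (pad a R w) p b := by
  funext j
  by_cases hj : j ∈ Finset.Icc (-(R : ℤ)) R
  · simp [pad, Word.update, hj, update_apply]
  · simp [pad, hj, show j ≠ p from fun h => hj (h ▸ hp)]

theorem mem_diffSet_iff {c d : (ℤ → A) → (ℤ → A)} (hc : HasRadius R c)
    (hd : HasRadius R d) (a : A) (w : Word A R) :
    w ∈ diffSet R c d ↔ c (pad a R w) 0 ≠ d (pad a R w) 0 := by
  refine ⟨fun ⟨x, hx, hne⟩ => ?_, fun h => ⟨pad a R w, pad_apply_coe w, h⟩⟩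
  have hxw : ∀ j : ℤ, |j| ≤ R → x j = pad a R w j := fun j hj => by
    have hjR : j ∈ Finset.Icc (-(R : ℤ)) R := Finset.mem_Icc.2 (abs_le.1 hj)
    exact (hx ⟨j, hjR⟩).trans (pad_apply_coe w ⟨j, hjR⟩).symm
  rwa [← hc.apply_zero_congr hxw, ← hd.apply_zero_congr hxw]

end Words

section Counting

open Finset

variable {A : Type} [Fintype A] [DecidableEq A]

theorem card_filter_forall_eq {ι : Type} [Fintype ι] [DecidableEq ι] (S : Finset ι) (z : A) :
    #{w : ι → A | ∀ j ∈ S, w j = z} = Fintype.card A ^ (Fintype.card ι - #S) := by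
  have hpi : ({w : ι → A | ∀ j ∈ S, w j = z} : Finset (ι → A)) =
      Fintype.piFinset fun j => if j ∈ S then {z} else univ := by
    ext w
    simp only [mem_filter, mem_univ, true_and, Fintype.mem_piFinset]
    refine ⟨fun h j => ?_, fun h j hj => by simpa [hj] using h j⟩
    by_cases hj : j ∈ S <;> simp [hj, h]
  rw [hpi, Fintype.card_piFinset]
  simp only [apply_ite card, card_singleton, card_univ, prod_ite, prod_const_one, one_mul,
    prod_const]
  rw [filter_not, filter_mem_eq_inter, univ_inter, ← compl_eq_univ_sdiff, card_compl]

theorem card_filter_pad_eq (a z : A) {R : ℕ} {T : Finset ℤ}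
    (hT : T ⊆ Finset.Icc (-(R : ℤ)) R) :
    (#{w : Word A R | ∀ j ∈ T, pad a R w j = z} : ℝ) =
      (Fintype.card A : ℝ) ^ (2 * R + 1) * (Fintype.card A : ℝ)⁻¹ ^ #T := by
  set W := Finset.Icc (-(R : ℤ)) R
  have hpad : ∀ w : Word A R,
      (∀ j ∈ T, pad a R w j = z) ↔ ∀ j ∈ T.subtype (· ∈ W), w j = z := fun w =>
    ⟨fun h j hj => (pad_apply_coe w j).symm.trans (h j (mem_subtype.1 hj)),
      fun h j hj => (pad_apply_coe w ⟨j, hT hj⟩).trans (h _ (mem_subtype.2 hj))⟩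
  have hcardT : #(T.subtype (· ∈ W)) = #T := by
    rw [card_subtype, filter_true_of_mem hT]
  have hcardW : Fintype.card W = 2 * R + 1 := by
    rw [Fintype.card_coe, Int.card_Icc]; omega
  have hA : (Fintype.card A : ℝ) ≠ 0 := by
    have : Nonempty A := ⟨z⟩; exact_mod_cast Fintype.card_ne_zero
  have hcard : #{w : Word A R | ∀ j ∈ T, pad a R w j = z} =
      #{w : W → A | ∀ j ∈ T.subtype (· ∈ W), w j = z} :=
    card_equiv (Equiv.refl _) fun w => by simp only [mem_filter, mem_univ, true_and, hpad]; rfl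
  rw [hcard, card_filter_forall_eq, hcardT, hcardW, Nat.cast_pow,
    pow_sub₀ _ hA (hcardT ▸ hcardW ▸ card_le_univ _), inv_pow]

theorem card_filter_pad_le {a z : A} (haz : a ≠ z) (R : ℕ) (T : Finset ℤ) :
    (#{w : Word A R | ∀ j ∈ T, pad a R w j = z} : ℝ) ≤
      (Fintype.card A : ℝ) ^ (2 * R + 1) * (Fintype.card A : ℝ)⁻¹ ^ #T := by
  by_cases hT : T ⊆ Finset.Icc (-(R : ℤ)) R
  · exact (card_filter_pad_eq a z hT).le
  · obtain ⟨j, hjT, hjW⟩ := not_subset.1 hT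
    have hempty : ({w : Word A R | ∀ j ∈ T, pad a R w j = z} : Finset (Word A R)) = ∅ :=
      filter_false_of_mem fun w _ h => haz ((pad_apply_of_notMem w hjW).symm.trans (h j hjT))
    rw [hempty, card_empty, Nat.cast_zero]
    positivity

theorem deltaR_eq_card_div {c d : (ℤ → A) → (ℤ → A)} {R : ℕ} (hc : HasRadius R c)
    (hd : HasRadius R d) (a : A) :
    deltaR R c d = #{w : Word A R | c (pad a R w) 0 ≠ d (pad a R w) 0} /
      (Fintype.card A : ℝ) ^ (2 * R + 1) := by
  rw [deltaR, ← Set.ncard_coe_finset]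
  congr
  ext w
  simp [mem_diffSet_iff hc hd a]

/- Each `w ∈ S` or its flip at `p` lies in the difference set: the flip is invisible to `c` but
not to `d`. Choosing between the two is injective on `S`, since `S` prescribes the value at `p`. -/
theorem card_le_card_filter_ne_of_flip {c d : (ℤ → A) → (ℤ → A)} {r R : ℕ}
    (hc : HasRadius r c) (a : A) {p : ℤ} (hpR : p ∈ Finset.Icc (-(R : ℤ)) R) (hrp : r < |p|)
    {z b : A}
    (S : Finset (Word A R)) (hS : ∀ w ∈ S, w ⟨p, hpR⟩ = z)
    (hd : ∀ w ∈ S, d (update (pad a R w) p b) 0 ≠ d (pad a R w) 0) :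
    #S ≤ #{w : Word A R | c (pad a R w) 0 ≠ d (pad a R w) 0} := by
  let g : Word A R → Word A R := fun w =>
    if c (pad a R w) 0 = d (pad a R w) 0 then w.update p b else w
  have hg : ∀ w (j : Finset.Icc (-(R : ℤ)) R), j.1 ≠ p → g w j = w j := fun w j hj => by
    by_cases h : c (pad a R w) 0 = d (pad a R w) 0 <;> simp [g, h, Word.update, hj]
  refine card_le_card_of_injOn g (fun w hw => ?_) fun w hw w' hw' hww' => ?_
  · by_cases h : c (pad a R w) 0 = d (pad a R w) 0
    · simp only [g, h, if_true, coe_filter, Set.mem_ofPred_eq, pad_wordUpdate w hpR,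
        hc.apply_update_zero _ hrp, mem_univ, true_and]
      exact (hd w hw).symm
    · simp [g, h]
  · funext j
    by_cases hj : j.1 = p
    · obtain rfl : j = ⟨p, hpR⟩ := Subtype.ext hj
      rw [hS w hw, hS w' hw']
    · rw [← hg w j hj, ← hg w' j hj, hww']

end Counting

section Blocks

open Finset

noncomputable def block (l : ℕ) : Finset ℤ := Ioc ((l : ℤ) ^ 2) (((l : ℤ) + 1) ^ 2)

theorem card_block (l : ℕ) : #(block l) = 2 * l + 1 := by
  rw [block, Int.card_Ioc]
  ring_nf
  omega

theorem mem_block {j : ℤ} {l : ℕ} :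
    j ∈ block l ↔ (l : ℤ) ^ 2 < j ∧ j ≤ ((l : ℤ) + 1) ^ 2 :=
  mem_Ioc

theorem succ_sq_mem_block (l : ℕ) : ((l : ℤ) + 1) ^ 2 ∈ block l :=
  mem_block.2 ⟨by have := l.cast_nonneg (α := ℤ); nlinarith, le_rfl⟩

theorem pos_le_sq_of_mem_block {j : ℤ} {l i : ℕ} (hj : j ∈ block l) (hli : l < i) :
    0 < j ∧ j ≤ (i : ℤ) ^ 2 := by
  obtain ⟨h₁, h₂⟩ := mem_block.1 hj
  have : (l : ℤ) + 1 ≤ i := by exact_mod_cast hli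
  exact ⟨lt_of_le_of_lt (sq_nonneg _) h₁, h₂.trans (by nlinarith)⟩

theorem disjoint_block {l l' : ℕ} (h : l ≠ l') : Disjoint (block l) (block l') := by
  wlog hlt : l < l' generalizing l l'
  · exact (this h.symm (by omega)).symm
  refine disjoint_left.2 fun j hj hj' => ?_
  have := (pos_le_sq_of_mem_block hj hlt).2
  have := (mem_block.1 hj').1
  omega

end Blocks

section BlockAutomata

open Finset

variable {A : Type} [DecidableEq A] (z : A) (τ : A → A)

noncomputable def zeroBlockCount (i : ℕ) (x : ℤ → A) : ℕ :=
  #{l ∈ range i | ∀ j ∈ block l, x j = z}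

noncomputable def blockCA (i : ℕ) (x : ℤ → A) (m : ℤ) : A :=
  τ^[zeroBlockCount z i fun j => x (m + j)] (x m)

variable {z τ}

theorem blockCA_apply_zero (i : ℕ) (x : ℤ → A) :
    blockCA z τ i x 0 = τ^[zeroBlockCount z i x] (x 0) := by
  simp [blockCA]

theorem zeroBlockCount_congr {i : ℕ} {x y : ℤ → A}
    (h : ∀ j : ℤ, 0 < j → j ≤ (i : ℤ) ^ 2 → x j = y j) :
    zeroBlockCount z i x = zeroBlockCount z i y := by
  refine congrArg card (filter_congr fun l hl => forall₂_congr fun j hj => ?_)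
  obtain ⟨hj₀, hji⟩ := pos_le_sq_of_mem_block hj (mem_range.1 hl)
  rw [h j hj₀ hji]

theorem hasRadius_blockCA (i : ℕ) : HasRadius (i ^ 2) (blockCA z τ i) := by
  refine ⟨fun u => τ^[zeroBlockCount z i u] (u 0), fun x y h => ?_,
    fun x m => by simp [blockCA]⟩
  have hcount := zeroBlockCount_congr (z := z) fun j hj₀ hji =>
    h j (by rw [abs_of_pos hj₀]; exact_mod_cast hji)
  simp only [h 0 (by simp), hcount]

theorem isCA_blockCA (i : ℕ) : IsCA (blockCA z τ i) := ⟨_, hasRadius_blockCA i⟩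

theorem zeroBlockCount_update {i l : ℕ} (hli : l < i) {x : ℤ → A}
    (hx : ∀ j ∈ block l, x j = z) {p : ℤ} (hp : p ∈ block l) {b : A} (hbz : b ≠ z) :
    zeroBlockCount z i x = zeroBlockCount z i (update x p b) + 1 := by
  have hother : ∀ l', l' ≠ l →
      ((∀ j ∈ block l', update x p b j = z) ↔ ∀ j ∈ block l', x j = z) := fun l' hl' =>
    forall₂_congr fun j hj => by
      rw [update_of_ne fun (hjp : j = p) => disjoint_left.1 (disjoint_block hl') hj (hjp ▸ hp)]
  have hl : ¬ ∀ j ∈ block l, update x p b j = z := fun h => hbz (by simpa using h p hp)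
  have hfilter : ({l' ∈ range i | ∀ j ∈ block l', x j = z} : Finset ℕ) =
      insert l {l' ∈ range i | ∀ j ∈ block l', update x p b j = z} := by
    ext l'
    by_cases hl' : l' = l
    · subst hl'; simpa [hli, hl] using hx
    · simp [hl', hother l' hl']
  rw [zeroBlockCount, zeroBlockCount, hfilter, card_insert_of_notMem (by simp [hl])]

theorem blockCA_apply_zero_eq_of_update {i l : ℕ} (hli : l < i) {x : ℤ → A}
    (hx : ∀ j ∈ block l, x j = z) {p : ℤ} (hp : p ∈ block l) {b : A} (hbz : b ≠ z) :
    blockCA z τ i x 0 = τ (blockCA z τ i (update x p b) 0) := by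
  have hp₀ : (0 : ℤ) ≠ p := (pos_le_sq_of_mem_block hp hli).1.ne
  rw [blockCA_apply_zero, blockCA_apply_zero, zeroBlockCount_update hli hx hp hbz,
    iterate_succ_apply', update_of_ne hp₀]

theorem sq_le_rad_blockCA (hτ : ∀ a, τ a ≠ a) {i : ℕ} (hi : 0 < i) :
    i ^ 2 ≤ rad (blockCA z τ i) := by
  obtain ⟨l, rfl⟩ : ∃ l, i = l + 1 := ⟨i - 1, by omega⟩
  by_contra! h
  have hflip := blockCA_apply_zero_eq_of_update (τ := τ) (lt_add_one l) (fun _ _ => rfl)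
    (succ_sq_mem_block l) (hτ z)
  have hfar : (rad (blockCA z τ (l + 1)) : ℤ) < |((l : ℤ) + 1) ^ 2| := by
    rw [abs_of_nonneg (by positivity)]
    exact_mod_cast h
  rw [(isCA_blockCA _).hasRadius_rad.apply_update_zero _ hfar] at hflip
  exact hτ _ hflip.symm

theorem exists_zero_block_of_ne {m n : ℕ} (hmn : m ≤ n) {x : ℤ → A}
    (h : blockCA z τ m x 0 ≠ blockCA z τ n x 0) :
    ∃ l ∈ Ico m n, ∀ j ∈ block l, x j = z := by
  by_contra! hno
  refine h ?_
  rw [blockCA_apply_zero, blockCA_apply_zero, zeroBlockCount, zeroBlockCount, range_eq_Ico,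
    range_eq_Ico, ← Ico_union_Ico_eq_Ico (Nat.zero_le m) hmn, filter_union,
    filter_false_of_mem (s := Ico m n) fun l hl h' => ?_, union_empty]
  obtain ⟨j, hj, hjz⟩ := hno l hl
  exact hjz (h' j hj)

end BlockAutomata

section Bounds

open Finset

variable {A : Type} [Fintype A] [DecidableEq A] {z : A} {τ : A → A}

/- Padding with `τ z ≠ z` ensures that a block reaching outside the window is never counted as
constantly `z`. -/
theorem deltaR_blockCA_le (hτ : ∀ a, τ a ≠ a) {m n R : ℕ} (hmn : m ≤ n)
    (hm : HasRadius R (blockCA z τ m)) (hn : HasRadius R (blockCA z τ n)) :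
    deltaR R (blockCA z τ m) (blockCA z τ n) ≤
      ∑ l ∈ Ico m n, (Fintype.card A : ℝ)⁻¹ ^ (2 * l + 1) := by
  let zeroOn (l : ℕ) : Finset (Word A R) := {w | ∀ j ∈ block l, pad (τ z) R w j = z}
  have hsub : ({w | blockCA z τ m (pad (τ z) R w) 0 ≠ blockCA z τ n (pad (τ z) R w) 0} :
      Finset (Word A R)) ⊆ (Ico m n).biUnion zeroOn := by
    intro w hw
    obtain ⟨l, hl, hlz⟩ := exists_zero_block_of_ne hmn (mem_filter.1 hw).2
    exact mem_biUnion.2 ⟨l, hl, mem_filter.2 ⟨mem_univ _, hlz⟩⟩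
  have hA : (0 : ℝ) < (Fintype.card A : ℝ) ^ (2 * R + 1) := by
    have : Nonempty A := ⟨z⟩; positivity
  rw [deltaR_eq_card_div hm hn (τ z), div_le_iff₀' hA, mul_sum]
  calc (#{w : Word A R | _} : ℝ) ≤ ∑ l ∈ Ico m n, (#(zeroOn l) : ℝ) := by
        exact_mod_cast (card_le_card hsub).trans card_biUnion_le
    _ ≤ _ := sum_le_sum fun l _ => card_block l ▸ card_filter_pad_le (hτ z) R (block l)

theorem delta_blockCA_le (hA : 2 ≤ Fintype.card A) (hτ : ∀ a, τ a ≠ a) {m n : ℕ}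
    (hmn : m ≤ n) :
    delta (blockCA z τ m) (blockCA z τ n) ≤ 2⁻¹ ^ m := by
  have hA' : (Fintype.card A : ℝ)⁻¹ ≤ 2⁻¹ := inv_anti₀ two_pos (by exact_mod_cast hA)
  refine (deltaR_blockCA_le hτ hmn ((isCA_blockCA m).hasRadius_rad.mono (le_max_left _ _))
    ((isCA_blockCA n).hasRadius_rad.mono (le_max_right _ _))).trans ?_
  calc ∑ l ∈ Ico m n, (Fintype.card A : ℝ)⁻¹ ^ (2 * l + 1)
      ≤ ∑ l ∈ Ico m n, 2⁻¹ * (2⁻¹ : ℝ) ^ l := sum_le_sum fun l _ => by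
        rw [← pow_succ']
        exact (pow_le_pow_left₀ (by positivity) hA' _).trans
          (pow_le_pow_of_le_one (by norm_num) (by norm_num) (by omega))
    _ ≤ 2⁻¹ * (2⁻¹ ^ m / (1 - 2⁻¹)) := by
        rw [← mul_sum]
        gcongr
        exact geom_sum_Ico_le_of_lt_one (by norm_num) (by norm_num)
    _ = 2⁻¹ ^ m := by ring

theorem inv_pow_le_delta_blockCA (hτ : ∀ a, τ a ≠ a) {c : (ℤ → A) → (ℤ → A)}
    (hc : IsCA c) {i : ℕ} (hi : rad c < i) :
    (Fintype.card A : ℝ)⁻¹ ^ (2 * rad c + 1) ≤ delta (blockCA z τ i) c := by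
  set r := rad c
  set R := max r (rad (blockCA z τ i))
  have hiR : (i : ℤ) ^ 2 ≤ R := by
    exact_mod_cast (sq_le_rad_blockCA hτ (by omega)).trans (le_max_right _ _)
  have hblock : block r ⊆ Finset.Icc (-(R : ℤ)) R := fun j hj => by
    obtain ⟨hj₀, hji⟩ := pos_le_sq_of_mem_block hj hi
    exact mem_Icc.2 ⟨by omega, hji.trans hiR⟩
  have hp := succ_sq_mem_block r
  have hrp : (r : ℤ) < |((r : ℤ) + 1) ^ 2| := by
    rw [abs_of_nonneg (by positivity)]
    nlinarith
  have hflip := card_le_card_filter_ne_of_flip (d := blockCA z τ i) hc.hasRadius_rad (τ z)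
    (hblock hp) hrp {w : Word A R | ∀ j ∈ block r, pad (τ z) R w j = z}
    (fun w hw => (pad_apply_coe w ⟨_, hblock hp⟩).symm.trans ((mem_filter.1 hw).2 _ hp))
    fun w hw => by
      rw [blockCA_apply_zero_eq_of_update hi (mem_filter.1 hw).2 hp (hτ z)]
      exact (hτ _).symm
  have hA : (0 : ℝ) < (Fintype.card A : ℝ) ^ (2 * R + 1) := by
    have : Nonempty A := ⟨z⟩; positivity
  rw [delta_comm, delta, deltaR_eq_card_div (hc.hasRadius_rad.mono (le_max_left _ _))
    ((isCA_blockCA i).hasRadius_rad.mono (le_max_right _ _)) (τ z), le_div_iff₀ hA, mul_comm,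
    ← card_block r, ← card_filter_pad_eq (τ z) z hblock]
  exact_mod_cast hflip

end Bounds

theorem exists_forall_apply_ne {α : Type} {a b : α} (hab : a ≠ b) :
    ∃ τ : α → α, ∀ x, τ x ≠ x := by
  classical
  refine ⟨fun x => if x = a then b else a, fun x => ?_⟩
  dsimp only
  split_ifs with hx
  · exact hx ▸ hab.symm
  · exact Ne.symm hx

/-- the uniform Bernoulli space of cellular automata is not complete:
there is a Cauchy sequence of cellular automata with no cellular automaton as limit. -/
theorem stmt9 {A : Type} [Fintype A] (hA : 2 ≤ Fintype.card A) :
    ∃ cs : ℕ → (ℤ → A) → (ℤ → A), (∀ i, IsCA (cs i)) ∧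
      (∀ ε : ℝ, 0 < ε → ∃ N : ℕ, ∀ m n : ℕ, N ≤ m → N ≤ n →
        delta (cs m) (cs n) < ε) ∧
      ¬ ∃ c, IsCA c ∧ Tendsto (fun i => delta (cs i) c) atTop (nhds 0) := by
  classical
  obtain ⟨z, b, hzb⟩ := Fintype.exists_pair_of_one_lt_card hA
  obtain ⟨τ, hτ⟩ := exists_forall_apply_ne hzb
  refine ⟨blockCA z τ, isCA_blockCA, fun ε hε => ?_, ?_⟩
  · obtain ⟨N, hN⟩ := exists_pow_lt_of_lt_one hε (by norm_num : (2⁻¹ : ℝ) < 1)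
    refine ⟨N, fun m n hm hn => ?_⟩
    wlog hmn : m ≤ n generalizing m n
    · rw [delta_comm]
      exact this n m hn hm (by omega)
    calc delta (blockCA z τ m) (blockCA z τ n) ≤ 2⁻¹ ^ m := delta_blockCA_le hA hτ hmn
      _ ≤ 2⁻¹ ^ N := pow_le_pow_of_le_one (by norm_num) (by norm_num) hm
      _ < ε := hN
  · rintro ⟨c, hc, hlim⟩
    have hpos : (0 : ℝ) < (Fintype.card A : ℝ)⁻¹ ^ (2 * rad c + 1) := by positivity
    obtain ⟨i, hclose, hi⟩ :=
      ((hlim.eventually (gt_mem_nhds hpos)).and (eventually_gt_atTop (rad c))).exists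
    exact hclose.not_ge (inv_pow_le_delta_blockCA hτ hc hi)
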